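/- In the field ℚ(q) of rational functions in an indeterminate q, for ε ∈ {+1, −1} and integers b ≥ 0 and k ≥ 1: T_k(ε·q^b, q) = Σ_{i=0}^{k−1} (q^{i(2k+1)} / (ε·q; q)_b) · [b choose i]_{q^2} · T_{k−i}(ε, q) + Σ_{i=0}^{b−1} ((ε·q; q)_i / (ε·q; q)_b) · q^{k(2k+2i+1)} · [b−i−1 choose k−1]_{q^2}. -/

import Mathlib

/-- The polynomials `T_k(t,q)` defined by `T_0 = 1` and, for `k ≥ 1`,
`T_k = T_{k-1} + (1+t)(-q)^{k²} + (1-t²) ∑_{i=1}^{k-1} (-q)^{k²-i²} T_{i-1}`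
(below the sum is reindexed by `i ↦ i+1`). -/
def T {R : Type*} [CommRing R] (t q : R) : ℕ → R
  | 0 => 1
  | (k+1) => T t q k + (1 + t) * (-q) ^ ((k+1)^2) +
      (1 - t^2) * ∑ i ∈ (Finset.range k).attach,
        (-q) ^ ((k+1)^2 - (i.1+1)^2) * T t q i.1
decreasing_by
  · exact Nat.lt_succ_self k
  · exact Nat.lt_succ_of_lt (Finset.mem_range.mp i.2)

/-- `f n h` with `f 0 0 = 1`, `f 0 h = 0` for `h ≥ 1`, `f n h = 0` for `h < 0`, and
`f n h = (1-q^h) f (n-1) (h-1) + (1-t q^{h+1}) f (n-1) (h+1)`; at `h = 0` the first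
term vanishes since `1 - q^0 = 0`. -/
def f {R : Type*} [CommRing R] (t q : R) : ℕ → ℕ → R
  | 0, h => if h = 0 then 1 else 0
  | (n+1), 0 => (1 - t * q) * f t q n 1
  | (n+1), (h+1) => (1 - q^(h+1)) * f t q n h + (1 - t * q^(h+2)) * f t q n (h+2)

/-- `Ẽ_n(t,q) = f(2n,0)`, which is `(1-q)^{2n}` times the `(t,q)`-Euler number. -/
def Etilde {R : Type*} [CommRing R] (t q : R) (n : ℕ) : R := f t q (2*n) 0

/-- Binomial coefficient with integer lower index, `0` when the lower index is negative. -/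
def binom (n : ℕ) (m : ℤ) : ℤ := if 0 ≤ m then (n.choose m.toNat : ℤ) else 0

/-- q-Pochhammer symbol `(a;q)_n = ∏_{j=0}^{n-1} (1 - a q^j)`. -/
def qPoch {K : Type*} [CommRing K] (a q : K) (n : ℕ) : K :=
  ∏ j ∈ Finset.range n, (1 - a * q ^ j)

/-- Gaussian binomial coefficient `[n choose k]_q = (q;q)_n / ((q;q)_k (q;q)_{n-k})`,
equal to `0` whenever `k < 0` or `k > n`. -/
def gauss {K : Type*} [Field K] (q : K) (n k : ℤ) : K :=
  if 0 ≤ k ∧ k ≤ n then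
    qPoch q q n.toNat / (qPoch q q k.toNat * qPoch q q (n - k).toNat)
  else 0

/-- Number of distinct (positive) part sizes of the partition encoded by an
antitone function `Fin m → Fin (n+1)`. -/
def distCard {m n : ℕ} (g : Fin m → Fin (n+1)) : ℕ :=
  ((Finset.univ.image fun i => ((g i : ℕ))).erase 0).card

/-- `∑_{λ ⊆ B(m,n)} x^{dist(λ)} q^{|λ|}`: partitions in the `m × n` box are encoded
as antitone functions `Fin m → Fin (n+1)`. -/
def boxSum {R : Type*} [CommRing R] (x q : R) (m n : ℕ) : R :=
  ∑ g ∈ Finset.univ.filter (fun g : Fin m → Fin (n+1) => ∀ i j : Fin m, i ≤ j → g j ≤ g i),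
    x ^ distCard g * q ^ (∑ i, (g i : ℕ))

/-- The indeterminate `q` in the field `ℚ(q)` of rational functions. -/
noncomputable def Xq : RatFunc ℚ := RatFunc.X


/-!
The polynomials `T_k` satisfy the three-term recurrence
`T_{m+2} = (1 - q^{2m+3}) T_{m+1} + t² q^{2m+3} T_m`, from which one gets the shift identity
`(1 - tq) T_{m+1}(tq, q) = T_{m+1}(t, q) + t² q^{2m+3} T_m(t, q)`.
At `t = ε q^b` we have `t² = q^{2b}`, so `(εq; q)_b T_k(εq^b, q)` obeys a recursion in `b`
and `k`.
By the `q²`-Pascal rule, the two sums on the right-hand side (multiplied by `(εq; q)_b`) obey the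
same recursion, and at `b = 0` both sides are `T_k(ε, q)`. Since `q` is not a root of unity,
none of the Pochhammer symbols involved vanish.
-/
open Finset

section TPolynomials

variable {R : Type*} [CommRing R] (t q : R)

theorem T_zero : T t q 0 = 1 := by
  rw [T]

theorem T_succ (k : ℕ) :
    T t q (k + 1) = T t q k + (1 + t) * (-q) ^ ((k + 1) ^ 2) +
      (1 - t ^ 2) * ∑ i ∈ range k, (-q) ^ ((k + 1) ^ 2 - (i + 1) ^ 2) * T t q i := by
  rw [T, sum_attach (range k) fun i ↦ (-q) ^ ((k + 1) ^ 2 - (i + 1) ^ 2) * T t q i]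

theorem T_one : T t q 1 = 1 - q - t * q := by
  rw [T_succ, T_zero]
  ring

/-- The sum in `T_{m+2}` is `(-q)^{2m+3}` times the one in `T_{m+1}` plus one new term, so it
can be eliminated. -/
theorem T_add_two (m : ℕ) :
    T t q (m + 2) = (1 - q ^ (2 * m + 3)) * T t q (m + 1) + t ^ 2 * q ^ (2 * m + 3) * T t q m := by
  have hexp (j : ℕ) (hj : j ≤ m + 1) :
      (m + 2) ^ 2 - j ^ 2 = 2 * m + 3 + ((m + 1) ^ 2 - j ^ 2) := by
    have : j ^ 2 ≤ (m + 1) ^ 2 := Nat.pow_le_pow_left hj 2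
    have : (m + 2) ^ 2 = (m + 1) ^ 2 + (2 * m + 3) := by ring
    omega
  have hodd : (-q) ^ (2 * m + 3) = -q ^ (2 * m + 3) := Odd.neg_pow ⟨m + 1, by ring⟩ q
  have hsum : ∑ i ∈ range (m + 1), (-q) ^ ((m + 2) ^ 2 - (i + 1) ^ 2) * T t q i =
      -q ^ (2 * m + 3) *
        (∑ i ∈ range m, (-q) ^ ((m + 1) ^ 2 - (i + 1) ^ 2) * T t q i + T t q m) := by
    rw [sum_range_succ, mul_add, mul_sum]
    congr 1
    · refine sum_congr rfl fun i hi ↦ ?_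
      rw [hexp (i + 1) (by simp at hi; omega), pow_add, hodd, mul_assoc]
    · rw [hexp (m + 1) le_rfl, Nat.sub_self, add_zero, hodd]
  have hsq : (-q) ^ ((m + 2) ^ 2) = -q ^ (2 * m + 3) * (-q) ^ ((m + 1) ^ 2) := by
    rw [← hodd, ← pow_add]
    ring_nf
  rw [show m + 2 = m + 1 + 1 from rfl, T_succ t q (m + 1), hsum, hsq]
  linear_combination q ^ (2 * m + 3) * T_succ t q m

theorem one_sub_mul_mul_T_mul_succ (m : ℕ) :
    (1 - t * q) * T (t * q) q (m + 1) = T t q (m + 1) + t ^ 2 * q ^ (2 * m + 3) * T t q m := by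
  induction m using Nat.twoStepInduction with
  | zero => rw [T_one, T_one, T_zero]; ring
  | one => rw [T_add_two, T_add_two, T_one, T_one, T_zero, T_zero]; ring
  | more n ih₀ ih₁ =>
    rw [T_add_two, T_add_two t q (n + 1)]
    linear_combination (1 - q ^ (2 * n + 5)) * ih₁ + q ^ (2 * n + 5) * (t * q) ^ 2 * ih₀ -
      t ^ 2 * q ^ (2 * n + 7) * T_add_two t q n

end TPolynomials

section Gauss

theorem qPoch_zero {R : Type*} [CommRing R] (a q : R) : qPoch a q 0 = 1 :=
  prod_range_zero _

theorem qPoch_succ {R : Type*} [CommRing R] (a q : R) (n : ℕ) :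
    qPoch a q (n + 1) = qPoch a q n * (1 - a * q ^ n) :=
  prod_range_succ _ _

variable {K : Type*} [Field K] (q : K)

theorem gauss_natCast {n k : ℕ} (h : k ≤ n) :
    gauss q n k = qPoch q q n / (qPoch q q k * qPoch q q (n - k)) := by
  rw [gauss, if_pos ⟨Int.natCast_nonneg k, by exact_mod_cast h⟩, Int.toNat_natCast,
    Int.toNat_natCast, ← Nat.cast_sub h, Int.toNat_natCast]

theorem gauss_of_lt {n k : ℤ} (h : n < k) : gauss q n k = 0 := by
  rw [gauss, if_neg]
  omega

variable {q} (hq : ∀ n, qPoch q q n ≠ 0)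
include hq

theorem gauss_zero_right {n : ℤ} (hn : 0 ≤ n) : gauss q n 0 = 1 := by
  lift n to ℕ using hn
  simpa [qPoch_zero, hq n] using gauss_natCast q (Nat.zero_le n)

theorem gauss_self (n : ℕ) : gauss q n n = 1 := by
  simp [gauss_natCast q le_rfl, qPoch_zero, hq n]

/-- The `q`-Pascal rule `[n+1, j+1] = [n, j+1] + q^{n-j} [n, j]`, multiplied by `q^j` so that
it holds for all `n, j` without truncated subtraction. -/
theorem pow_mul_gauss_succ_succ (n j : ℕ) :
    q ^ j * gauss q (n + 1) (j + 1) = q ^ j * gauss q n (j + 1) + q ^ n * gauss q n j := by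
  rcases lt_trichotomy j n with hjn | rfl | hnj
  · obtain ⟨u, rfl⟩ : ∃ u, n = j + u + 1 := ⟨n - j - 1, by omega⟩
    have hn1 : ((j + u + 1 : ℕ) : ℤ) + 1 = ((j + u + 2 : ℕ) : ℤ) := by push_cast; ring
    have hj1 : (j : ℤ) + 1 = ((j + 1 : ℕ) : ℤ) := by push_cast; ring
    rw [hn1, hj1, gauss_natCast q (by omega), gauss_natCast q (by omega),
      gauss_natCast q (by omega),
      show j + u + 2 - (j + 1) = u + 1 by omega, show j + u + 1 - (j + 1) = u by omega,
      show j + u + 1 - j = u + 1 by omega, show j + u + 2 = j + u + 1 + 1 from rfl,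
      qPoch_succ q q (j + u + 1), qPoch_succ q q j, qPoch_succ q q u]
    have hsucc (n : ℕ) : qPoch q q n ≠ 0 ∧ 1 - q ^ (n + 1) ≠ 0 := by
      rw [← mul_ne_zero_iff, pow_succ', ← qPoch_succ]
      exact hq (n + 1)
    obtain ⟨_, _⟩ := hsucc j
    obtain ⟨_, _⟩ := hsucc u
    have := hq (j + u + 1)
    simp only [← pow_succ']
    field_simp
    ring
  · rw [gauss_of_lt q (by omega : (j : ℤ) < j + 1), gauss_self hq]
    have h := gauss_self hq (j + 1)
    push_cast at h
    rw [h]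
    ring
  · rw [gauss_of_lt q (by omega : (n : ℤ) + 1 < j + 1),
      gauss_of_lt q (by omega : (n : ℤ) < j + 1), gauss_of_lt q (by omega : (n : ℤ) < j)]
    ring

end Gauss

section Expansion

variable {K : Type*} [Field K] (ε q : K)

def sumGaussT (b k : ℕ) : K :=
  ∑ i ∈ range k, q ^ (i * (2 * k + 1)) * gauss (q ^ 2) b i * T ε q (k - i)

def sumPochGauss (b k : ℕ) : K :=
  ∑ i ∈ range b,
    qPoch (ε * q) q i * q ^ (k * (2 * k + 2 * i + 1)) *
      gauss (q ^ 2) ((b : ℤ) - i - 1) ((k : ℤ) - 1)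

theorem sumGaussT_zero_left {k : ℕ} (hk : 1 ≤ k) : sumGaussT ε q 0 k = T ε q k := by
  obtain ⟨m, rfl⟩ : ∃ m, k = m + 1 := ⟨k - 1, by omega⟩
  rw [sumGaussT, sum_range_succ', sum_eq_zero fun i _ ↦ by
    rw [gauss_of_lt _ (by omega : ((0 : ℕ) : ℤ) < (i + 1 : ℕ)), mul_zero, zero_mul]]
  simp [gauss, qPoch_zero]

variable {q} (hq : ∀ n, qPoch (q ^ 2) (q ^ 2) n ≠ 0)
include hq

theorem sumGaussT_succ_succ (b m : ℕ) :
    sumGaussT ε q (b + 1) (m + 1) =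
      sumGaussT ε q b (m + 1) + q ^ (2 * b + 2 * m + 3) * sumGaussT ε q b m := by
  have hterm (i : ℕ) :
      q ^ ((i + 1) * (2 * (m + 1) + 1)) * gauss (q ^ 2) (b + 1 : ℕ) (i + 1 : ℕ) * T ε q (m - i) =
        q ^ ((i + 1) * (2 * (m + 1) + 1)) * gauss (q ^ 2) b (i + 1 : ℕ) * T ε q (m - i) +
          q ^ (2 * b + 2 * m + 3) *
            (q ^ (i * (2 * m + 1)) * gauss (q ^ 2) b i * T ε q (m - i)) := by
    push_cast
    linear_combination
      q ^ (i * (2 * m + 1) + 2 * m + 3) * T ε q (m - i) * pow_mul_gauss_succ_succ hq b i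
  rw [sumGaussT, sumGaussT, sumGaussT, sum_range_succ', sum_range_succ' _ m]
  simp only [Nat.add_sub_add_right]
  rw [sum_congr rfl fun i _ ↦ hterm i, sum_add_distrib, mul_sum, Nat.cast_zero,
    gauss_zero_right hq (by omega), gauss_zero_right hq (by omega)]
  ring

theorem sumPochGauss_succ_one (b : ℕ) :
    sumPochGauss ε q (b + 1) 1 = sumPochGauss ε q b 1 + q ^ (2 * b + 3) * qPoch (ε * q) q b := by
  rw [sumPochGauss, sumPochGauss, sum_range_succ, Nat.cast_one, sub_self,
    gauss_zero_right hq (by omega)]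
  congr 1
  · refine sum_congr rfl fun i hi ↦ ?_
    rw [mem_range] at hi
    rw [gauss_zero_right hq (by omega), gauss_zero_right hq (by omega)]
  · ring

theorem sumPochGauss_succ_succ_succ (b m : ℕ) :
    sumPochGauss ε q (b + 1) (m + 2) =
      sumPochGauss ε q b (m + 2) + q ^ (2 * b + 2 * m + 5) * sumPochGauss ε q b (m + 1) := by
  rw [sumPochGauss, sumPochGauss, sumPochGauss, sum_range_succ, gauss_of_lt _ (by omega),
    mul_zero, add_zero, mul_sum, ← sum_add_distrib]
  refine sum_congr rfl fun i hi ↦ ?_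
  obtain ⟨n, rfl⟩ : ∃ n, b = i + n + 1 := ⟨b - i - 1, by rw [mem_range] at hi; omega⟩
  rw [show ((i + n + 1 + 1 : ℕ) : ℤ) - i - 1 = n + 1 by push_cast; ring,
    show ((i + n + 1 : ℕ) : ℤ) - i - 1 = n by push_cast; ring,
    show ((m + 2 : ℕ) : ℤ) - 1 = m + 1 by push_cast; ring,
    show ((m + 1 : ℕ) : ℤ) - 1 = m by push_cast; ring]
  linear_combination qPoch (ε * q) q i * q ^ (2 * m ^ 2 + 2 * m * i + 7 * m + 4 * i + 10) *
    pow_mul_gauss_succ_succ hq n m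

theorem qPoch_mul_T_mul_pow (hε : ε ^ 2 = 1) (b : ℕ) {k : ℕ} (hk : 1 ≤ k) :
    qPoch (ε * q) q b * T (ε * q ^ b) q k = sumGaussT ε q b k + sumPochGauss ε q b k := by
  induction b generalizing k with
  | zero =>
    rw [qPoch_zero, pow_zero, mul_one, one_mul, sumGaussT_zero_left ε q hk, sumPochGauss,
      sum_range_zero, add_zero]
  | succ b ih =>
    obtain ⟨m, rfl⟩ : ∃ m, k = m + 1 := ⟨k - 1, by omega⟩
    have hshift : qPoch (ε * q) q (b + 1) * T (ε * q ^ (b + 1)) q (m + 1) =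
        qPoch (ε * q) q b * T (ε * q ^ b) q (m + 1) +
          q ^ (2 * b + 2 * m + 3) * (qPoch (ε * q) q b * T (ε * q ^ b) q m) := by
      rw [qPoch_succ, show ε * q ^ (b + 1) = ε * q ^ b * q by ring]
      linear_combination qPoch (ε * q) q b * one_sub_mul_mul_T_mul_succ (ε * q ^ b) q m +
        qPoch (ε * q) q b * q ^ (2 * b + 2 * m + 3) * T (ε * q ^ b) q m * hε
    rw [hshift, ih (by omega), sumGaussT_succ_succ ε hq]
    rcases m with _ | m
    · rw [T_zero, sumPochGauss_succ_one ε hq, sumGaussT.eq_1 ε q b 0, sum_range_zero]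
      ring
    · rw [ih (by omega), sumPochGauss_succ_succ_succ ε hq]
      ring

end Expansion

section NotRootOfUnity

variable {K : Type*} [Field K] {ε q : K} (hq : ¬IsOfFinOrder q) (hε : ε ^ 2 = 1)
include hq hε

theorem one_sub_mul_pow_ne_zero {n : ℕ} (hn : n ≠ 0) : 1 - ε * q ^ n ≠ 0 := by
  intro h
  refine hq (isOfFinOrder_iff_pow_eq_one.mpr ⟨2 * n, by omega, ?_⟩)
  linear_combination -(1 + ε * q ^ n) * h - q ^ (2 * n) * hε

theorem qPoch_mul_ne_zero (n : ℕ) : qPoch (ε * q) q n ≠ 0 :=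
  prod_ne_zero_iff.mpr fun j _ ↦ by
    rw [mul_assoc, ← pow_succ']
    exact one_sub_mul_pow_ne_zero hq hε (Nat.succ_ne_zero j)

end NotRootOfUnity

theorem qPoch_sq_ne_zero {K : Type*} [Field K] {q : K} (hq : ¬IsOfFinOrder q) (n : ℕ) :
    qPoch (q ^ 2) (q ^ 2) n ≠ 0 := by
  simpa using qPoch_mul_ne_zero (ε := 1) (fun h ↦ hq (h.of_pow two_ne_zero)) (one_pow 2) n

theorem RatFunc.not_isOfFinOrder_X {F : Type*} [Field F] : ¬IsOfFinOrder (X : RatFunc F) := by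
  rw [isOfFinOrder_iff_pow_eq_one]
  rintro ⟨n, hn, h⟩
  have := congrArg intDegree h
  rw [← algebraMap_X, ← map_pow, intDegree_polynomial, intDegree_one] at this
  simp at this
  omega

theorem stmt_3 (ε : RatFunc ℚ) (hε : ε = 1 ∨ ε = -1) (b k : ℕ) (hk : 1 ≤ k) :
    T (ε * Xq^b) Xq k =
      (∑ i ∈ Finset.range k,
        Xq^(i*(2*k+1)) / qPoch (ε * Xq) Xq b * gauss (Xq^2) (b:ℤ) (i:ℤ) * T ε Xq (k-i))
      + ∑ i ∈ Finset.range b,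
          qPoch (ε * Xq) Xq i / qPoch (ε * Xq) Xq b * Xq^(k*(2*k+2*i+1)) *
            gauss (Xq^2) ((b:ℤ) - i - 1) ((k:ℤ) - 1) := by
  have hX : ¬IsOfFinOrder Xq := RatFunc.not_isOfFinOrder_X
  have hε2 : ε ^ 2 = 1 := by rcases hε with rfl | rfl <;> norm_num
  have hP := qPoch_mul_ne_zero hX hε2 b
  rw [← mul_right_inj' hP, qPoch_mul_T_mul_pow ε (qPoch_sq_ne_zero hX) hε2 b hk, sumGaussT,
    sumPochGauss, mul_add, mul_sum, mul_sum]
  congr 1 <;> refine sum_congr rfl fun i _ ↦ ?_ <;>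
    rw [← mul_assoc, ← mul_assoc, mul_div_cancel₀ _ hP]
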